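/- arXiv:2403.09790 — 2 statements merged into one kernel-verified Lean document; each statement's English description precedes it below -/
import Mathlib

section
/- Let A be a differential graded algebra over k (characteristic 2), and let (N, δ¹) be a left type-D structure over A. Then A ⊗_k N equipped with m₁ = (μ₂ ⊗ id_N) ∘ (id_A ⊗ δ¹) + μ₁ ⊗ id_N and module structure m₂ = μ₂ ⊗ id_N is a differential left A-module: m₁ ∘ m₁ = 0 and m₁ satisfies the Leibniz rule with respect to the A-action. -/
open TensorProduct

section aux

variable {k A N : Type*} [CommRing k] [CharP k 2] [Ring A] [Algebra k A]
    [AddCommGroup N] [Module k N]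

omit [CharP k 2] in
lemma stmt5_aux1 (a : A) (x : A ⊗[k] N) :
    LinearMap.rTensor N (LinearMap.mul' k A)
      ((TensorProduct.assoc k A A N).symm (a ⊗ₜ x)) =
    LinearMap.rTensor N (LinearMap.mulLeft k a) x := by
  induction x using TensorProduct.induction_on with
  | zero => simp
  | tmul b n => simp [LinearMap.mul'_apply]
  | add x y hx hy => simp [tmul_add, map_add, hx, hy]

lemma stmt5_char2 {M : Type*} [AddCommGroup M] [Module k M] (x : M) : x + x = 0 := by
  have : ((2 : k)) • x = 0 := by
    rw [show ((2 : k)) = 0 from CharP.cast_eq_zero k 2, zero_smul]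
  rwa [show ((2:k)) = ((2:ℕ):k) by norm_num, Nat.cast_smul_eq_nsmul, two_nsmul] at this

end aux

/-- Let `A` be a dg-algebra over `k` (characteristic 2) with differential
`μ₁` and multiplication `μ₂`, and let `(N, δ¹)` be a left type-D structure over `A`, i.e.
`(μ₂ ⊗ id) ∘ (id ⊗ δ¹) ∘ δ¹ + (μ₁ ⊗ id) ∘ δ¹ = 0`.  Then `A ⊗ₖ N`, equipped with
`m₁ = (μ₂ ⊗ id) ∘ (id ⊗ δ¹) + μ₁ ⊗ id` and left `A`-action `m₂ = μ₂ ⊗ id`, is a differential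
left `A`-module: `m₁ ∘ m₁ = 0` and `m₁` satisfies the Leibniz rule with respect to the
`A`-action (here `a ↦ mulLeft a ⊗ id` is the action of `a` on `A ⊗ N`). -/
theorem stmt5 {k A N : Type*} [CommRing k] [CharP k 2] [Ring A] [Algebra k A]
    [AddCommGroup N] [Module k N]
    (μ₁ : A →ₗ[k] A) (hμ₁ : μ₁ ∘ₗ μ₁ = 0)
    (hLeib : ∀ a b : A, μ₁ (a * b) = μ₁ a * b + a * μ₁ b)
    (δ : N →ₗ[k] A ⊗[k] N)
    -- the type-D structure relation
    (hD : (LinearMap.rTensor N (LinearMap.mul' k A) ∘ₗ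
            (TensorProduct.assoc k A A N).symm.toLinearMap ∘ₗ
            LinearMap.lTensor A δ + LinearMap.rTensor N μ₁) ∘ₗ δ = 0) :
    -- m₁ squares to zero
    ((LinearMap.rTensor N (LinearMap.mul' k A) ∘ₗ
        (TensorProduct.assoc k A A N).symm.toLinearMap ∘ₗ
        LinearMap.lTensor A δ + LinearMap.rTensor N μ₁) ∘ₗ
      (LinearMap.rTensor N (LinearMap.mul' k A) ∘ₗ
        (TensorProduct.assoc k A A N).symm.toLinearMap ∘ₗ
        LinearMap.lTensor A δ + LinearMap.rTensor N μ₁) = 0) ∧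
    -- m₁ satisfies the Leibniz rule with respect to the left A-action on A ⊗ N
    (∀ (a : A) (t : A ⊗[k] N),
      (LinearMap.rTensor N (LinearMap.mul' k A) ∘ₗ
        (TensorProduct.assoc k A A N).symm.toLinearMap ∘ₗ
        LinearMap.lTensor A δ + LinearMap.rTensor N μ₁)
          (LinearMap.rTensor N (LinearMap.mulLeft k a) t) =
        LinearMap.rTensor N (LinearMap.mulLeft k (μ₁ a)) t +
          LinearMap.rTensor N (LinearMap.mulLeft k a)
            ((LinearMap.rTensor N (LinearMap.mul' k A) ∘ₗ
              (TensorProduct.assoc k A A N).symm.toLinearMap ∘ₗ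
              LinearMap.lTensor A δ + LinearMap.rTensor N μ₁) t)) := by
  set F : A ⊗[k] N →ₗ[k] A ⊗[k] N :=
    LinearMap.rTensor N (LinearMap.mul' k A) ∘ₗ
      (TensorProduct.assoc k A A N).symm.toLinearMap ∘ₗ
      LinearMap.lTensor A δ + LinearMap.rTensor N μ₁ with hF
  have hFtmul : ∀ (a : A) (n : N),
      F (a ⊗ₜ n) = LinearMap.rTensor N (LinearMap.mulLeft k a) (δ n) + μ₁ a ⊗ₜ n := by
    intro a n
    simp [hF, stmt5_aux1]
  have hD' : ∀ n : N, F (δ n) = 0 := by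
    intro n
    simpa using LinearMap.congr_fun hD n
  have hLeibF : ∀ (a : A) (t : A ⊗[k] N),
      F (LinearMap.rTensor N (LinearMap.mulLeft k a) t) =
        LinearMap.rTensor N (LinearMap.mulLeft k (μ₁ a)) t +
          LinearMap.rTensor N (LinearMap.mulLeft k a) (F t) := by
    intro a t
    induction t using TensorProduct.induction_on with
    | zero => simp
    | tmul b n =>
        have hml : LinearMap.mulLeft k (a * b) =
            LinearMap.mulLeft k a ∘ₗ LinearMap.mulLeft k b := by
          ext x; simp [mul_assoc]
        rw [LinearMap.rTensor_tmul, LinearMap.mulLeft_apply, hFtmul (a*b) n, hFtmul b n,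
          map_add, hLeib a b, add_tmul, hml, LinearMap.rTensor_comp]
        simp only [LinearMap.rTensor_tmul, LinearMap.mulLeft_apply, LinearMap.comp_apply]
        abel
    | add x y hx hy => simp only [map_add, hx, hy]; abel
  refine ⟨?_, ?_⟩
  · apply TensorProduct.ext'
    intro a n
    simp only [LinearMap.comp_apply, LinearMap.zero_apply]
    rw [hFtmul a n, map_add, hFtmul (μ₁ a) n]
    have hμ := LinearMap.congr_fun hμ₁ a
    simp only [LinearMap.comp_apply, LinearMap.zero_apply] at hμ
    rw [hμ, hLeibF a (δ n), hD' n, map_zero]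
    simp only [zero_tmul, add_zero, LinearMap.zero_apply]
    exact stmt5_char2 (k := k) _
  · intro a t
    exact hLeibF a t
end

section
/- Define ι_n : {1,…,4n} → {1,…,4n+4} by ι_n(1) = 4 and ι_n(i) = i + 4 for i > 1. For a partial permutation (S, T, σ) with S, T ⊆ {1,…,4n+4} disjoint from h, let (S,T,σ)_h = (S ∪ {h}, T ∪ {h}, σ_h) where σ_h extends σ by σ_h(h) = h. Then the F₂-linear map L_n sending a basis partial permutation (S, T, σ) on {1,…,4n} to Σ_{h ∈ {1,3}} (ι_n(S), ι_n(T), ι_n ∘ σ ∘ ι_n^{-1})_h is injective. Moreover the image of L_n commutes with the element ρ_{1,3} in the sense that [ρ_{1,3}, L_n(ρ)] = ρ_{1,3}L_n(ρ) + L_n(ρ)ρ_{1,3} = 0 for all ρ, where ρ_{1,3} is the strand from 1 to 3. -/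
open scoped Classical

namespace Stmt19

/-- A (raw) partial permutation: a pair of subsets `S, T ⊆ ℕ` together with a strand function
`σ : ℕ → ℕ` (normalized to be the identity away from `S`). -/
abbrev Raw : Type := Finset ℕ × Finset ℕ × (ℕ → ℕ)

/-- The strands-algebra-type module: formal `F₂`-linear combinations of partial
permutations. -/
abbrev SAlg : Type := Raw →₀ ZMod 2

/-- Multiplication of strand diagrams: concatenation when the right endpoints of the first
match the left endpoints of the second, and zero otherwise. -/
noncomputable def smul' (x y : SAlg) : SAlg :=
  x.sum fun p a => y.sum fun q b =>
    if p.2.1 = q.1 then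
      Finsupp.single (p.1, q.2.1, fun j => if j ∈ p.1 then q.2.2 (p.2.2 j) else j) (a * b)
    else 0

/-- The injection `ι_n` on points: `ι_n 1 = 4` and `ι_n i = i + 4` otherwise. -/
def iot : ℕ → ℕ := fun i => if i = 1 then 4 else i + 4

/-- Partial inverse of `iot`. -/
def iotInv : ℕ → ℕ := fun j => if j = 4 then 1 else j - 4

/-- Insertion of a horizontal strand at height `h` into the `ι_n`-translated diagram:
`(S,T,σ) ↦ (ι_n(S) ∪ {h}, ι_n(T) ∪ {h}, σ_h)` with `σ_h(h) = h`. -/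
def Th (h : ℕ) (p : Raw) : Raw :=
  (insert h (p.1.image iot), insert h (p.2.1.image iot),
    fun j => if j = h then h else if j ∈ p.1.image iot then iot (p.2.2 (iotInv j)) else j)

/-- The linear map `L_n : A_n → A_{n+1}`, sending a basis partial permutation `(S,T,σ)` to
`Σ_{h ∈ {1,3}} (ι_n(S), ι_n(T), ι_n ∘ σ ∘ ι_n⁻¹)_h`. -/
noncomputable def Lmap : SAlg →ₗ[ZMod 2] SAlg :=
  Finsupp.lsum (ZMod 2) fun p =>
    LinearMap.toSpanSingleton (ZMod 2) SAlg
      (Finsupp.single (Th 1 p) 1 + Finsupp.single (Th 3 p) 1)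

/-- Genuine partial permutations on `{1,…,4n}`: `σ` restricts to a nondecreasing bijection
`S → T` (and is the identity elsewhere). -/
def Good (n : ℕ) (p : Raw) : Prop :=
  p.1 ⊆ Finset.Icc 1 (4 * n) ∧ p.2.1 ⊆ Finset.Icc 1 (4 * n) ∧
    Set.BijOn p.2.2 ↑p.1 ↑p.2.1 ∧ MonotoneOn p.2.2 ↑p.1 ∧
    ∀ j ∉ p.1, p.2.2 j = j

/-- The algebra element `ρ_{1,3}` of `A_{n+1}`: the strand from 1 to 3, summed over all
horizontal completions. -/
noncomputable def rho13 (n : ℕ) : SAlg :=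
  ∑ V ∈ ((Finset.Icc 1 (4 * n + 4)) \ {1, 3}).powerset,
    Finsupp.single (insert 1 V, insert 3 V, fun j => if j = 1 then 3 else j) 1

/-!
`ι_n` has a left inverse on positive integers and misses `1` and `3`. Hence the summand
`(·)_1` of `L_n` determines the genuine partial permutation it comes from and never equals a
summand `(·)_3`, so `L_n` is injective. For the commutator, `ρ_{1,3}` composes on the left only
with the summand at `h = 3` and on the right only with the summand at `h = 1`; both composites
are the same diagram `Th13 p` (the strand `1 → 3` beside the translate of `p`), and they cancel
in characteristic 2.
-/

lemma _root_.Finset.eq_of_insert_eq_insert {α : Type*} [DecidableEq α] {a : α} {s t : Finset α}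
    (hs : a ∉ s) (ht : a ∉ t) (h : insert a s = insert a t) : s = t := by
  rw [← Finset.erase_insert hs, h, Finset.erase_insert ht]

lemma four_le_iot (i : ℕ) : 4 ≤ iot i := by unfold iot; split <;> omega

lemma iot_ne_of_lt_four {h : ℕ} (hh : h < 4) (i : ℕ) : iot i ≠ h :=
  (hh.trans_le (four_le_iot i)).ne'

lemma notMem_image_iot_of_lt_four {h : ℕ} (hh : h < 4) (s : Finset ℕ) : h ∉ s.image iot := by
  simpa using fun i _ => iot_ne_of_lt_four hh i

lemma iotInv_iot {i : ℕ} (hi : 1 ≤ i) : iotInv (iot i) = i := by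
  unfold iot iotInv; split_ifs <;> omega

lemma iot_injOn : Set.InjOn iot (Set.Ici 1) := fun a ha b hb hab => by
  rw [← iotInv_iot ha, hab, iotInv_iot hb]

lemma iot_injOn_Icc (n : ℕ) : Set.InjOn iot ↑(Finset.Icc 1 (4 * n)) :=
  iot_injOn.mono fun _ hi => (Finset.mem_Icc.mp hi).1

lemma image_iot_injOn (n : ℕ) :
    Set.InjOn (fun s : Finset ℕ => s.image iot) ↑(Finset.Icc 1 (4 * n)).powerset :=
  Finset.image_injOn_powerset_of_injOn (iot_injOn_Icc n)

lemma image_iot_mem_powerset {n : ℕ} {s : Finset ℕ} (hs : s ⊆ Finset.Icc 1 (4 * n)) :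
    s.image iot ∈ ((Finset.Icc 1 (4 * n + 4)) \ {1, 3}).powerset := by
  simp only [Finset.mem_powerset, Finset.subset_iff, Finset.mem_image, forall_exists_index,
    and_imp, forall_apply_eq_imp_iff₂]
  intro i hi
  have := Finset.mem_Icc.mp (hs hi)
  simp only [Finset.mem_sdiff, Finset.mem_Icc, Finset.mem_insert, Finset.mem_singleton, iot]
  split_ifs <;> omega

lemma eq_of_insert_image_iot_eq {n h : ℕ} (hh : h < 4) {s t : Finset ℕ}
    (hs : s ⊆ Finset.Icc 1 (4 * n)) (ht : t ⊆ Finset.Icc 1 (4 * n))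
    (hst : insert h (s.image iot) = insert h (t.image iot)) : s = t :=
  image_iot_injOn n (Finset.mem_powerset.mpr hs) (Finset.mem_powerset.mpr ht) <|
    Finset.eq_of_insert_eq_insert (notMem_image_iot_of_lt_four hh _)
      (notMem_image_iot_of_lt_four hh _) hst

lemma Th_injOn {n h : ℕ} (hh : h < 4) : Set.InjOn (Th h) {p | Good n p} := by
  rintro ⟨S, T, σ⟩ ⟨hS, hT, hσ, -, hσid⟩ ⟨S', T', σ'⟩ ⟨hS', hT', hσ', -, hσid'⟩ heq
  dsimp only at hS hT hσ hσid hS' hT' hσ' hσid'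
  simp only [Th, Prod.mk.injEq] at heq
  obtain ⟨hSS', hTT', hσσ'⟩ := heq
  obtain rfl : S = S' := eq_of_insert_image_iot_eq hh hS hS' hSS'
  obtain rfl : T = T' := eq_of_insert_image_iot_eq hh hT hT' hTT'
  simp only [Prod.mk.injEq, true_and]
  funext j
  by_cases hj : j ∈ S
  · have := congrFun hσσ' (iot j)
    have hj1 : 1 ≤ j := (Finset.mem_Icc.mp (hS hj)).1
    simp only [iot_ne_of_lt_four hh, Finset.mem_image_of_mem iot hj, iotInv_iot hj1,
      if_true, if_false] at this
    exact iot_injOn (Finset.mem_Icc.mp (hT (hσ.mapsTo hj))).1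
      (Finset.mem_Icc.mp (hT' (hσ'.mapsTo hj))).1 this
  · rw [hσid j hj, hσid' j hj]

lemma Th_ne_Th {h h' : ℕ} (hh' : h' < 4) (hne : h ≠ h') (p q : Raw) : Th h p ≠ Th h' q := by
  intro heq
  have hmem : h' ∈ (Th h p).1 := heq ▸ Finset.mem_insert_self _ _
  rcases Finset.mem_insert.mp hmem with rfl | hmem
  · exact hne rfl
  · exact notMem_image_iot_of_lt_four hh' _ hmem

lemma Lmap_apply (x : SAlg) :
    Lmap x = x.sum fun p a => Finsupp.single (Th 1 p) a + Finsupp.single (Th 3 p) a := by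
  rw [Lmap, Finsupp.lsum_apply]
  refine Finsupp.sum_congr fun p _ => ?_
  rw [LinearMap.toSpanSingleton_apply, smul_add, Finsupp.smul_single_one, Finsupp.smul_single_one]

lemma Lmap_apply_Th_one {n : ℕ} {x : SAlg} (hx : ∀ q ∈ x.support, Good n q) {p : Raw}
    (hp : Good n p) : Lmap x (Th 1 p) = x p := by
  rw [Lmap_apply, Finsupp.sum, Finsupp.finsetSum_apply]
  have hTh3 : ∀ q, Finsupp.single (Th 3 q) (x q) (Th 1 p) = 0 := fun q =>
    Finsupp.single_eq_of_ne (Th_ne_Th (by norm_num : 3 < 4) (by norm_num : 1 ≠ 3) p q)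
  refine (Finset.sum_eq_single p (fun q hq hqp => ?_) fun hp' => ?_).trans ?_
  · rw [Finsupp.add_apply, hTh3, add_zero,
      Finsupp.single_eq_of_ne fun h => hqp (Th_injOn (by norm_num : 1 < 4) (hx q hq) hp h.symm)]
  · simp [Finsupp.notMem_support_iff.mp hp']
  · rw [Finsupp.add_apply, hTh3, add_zero, Finsupp.single_eq_same]

lemma Lmap_injOn (n : ℕ) : Set.InjOn Lmap {x : SAlg | ∀ p ∈ x.support, Good n p} := by
  intro x hx y hy hxy
  ext p
  by_cases hp : Good n p
  · rw [← Lmap_apply_Th_one hx hp, ← Lmap_apply_Th_one hy hp, hxy]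
  · rw [Finsupp.notMem_support_iff.mp (mt (hx p) hp), Finsupp.notMem_support_iff.mp (mt (hy p) hp)]

lemma smul'_add_left (x x' y : SAlg) : smul' (x + x') y = smul' x y + smul' x' y := by
  unfold smul'
  refine Finsupp.sum_add_index' (fun p => by simp) fun p a a' => ?_
  rw [← Finsupp.sum_add]
  refine Finsupp.sum_congr fun q _ => ?_
  split_ifs
  · rw [add_mul, Finsupp.single_add]
  · rw [add_zero]

lemma smul'_add_right (x y y' : SAlg) : smul' x (y + y') = smul' x y + smul' x y' := by
  unfold smul'
  rw [← Finsupp.sum_add]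
  refine Finsupp.sum_congr fun p _ => Finsupp.sum_add_index' (fun q => by simp) fun q b b' => ?_
  split_ifs
  · rw [mul_add, Finsupp.single_add]
  · rw [add_zero]

lemma smul'_sum_left {ι : Type*} (s : Finset ι) (f : ι → SAlg) (y : SAlg) :
    smul' (∑ i ∈ s, f i) y = ∑ i ∈ s, smul' (f i) y :=
  map_sum (AddMonoidHom.mk' (smul' · y) fun x x' => smul'_add_left x x' y) f s

lemma smul'_sum_right {ι : Type*} (s : Finset ι) (f : ι → SAlg) (x : SAlg) :
    smul' x (∑ i ∈ s, f i) = ∑ i ∈ s, smul' x (f i) :=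
  map_sum (AddMonoidHom.mk' (smul' x) (smul'_add_right x)) f s

lemma smul'_single_single (p q : Raw) (a b : ZMod 2) :
    smul' (Finsupp.single p a) (Finsupp.single q b) =
      if p.2.1 = q.1 then
        Finsupp.single (p.1, q.2.1, fun j => if j ∈ p.1 then q.2.2 (p.2.2 j) else j) (a * b)
      else 0 := by
  unfold smul'
  rw [Finsupp.sum_single_index, Finsupp.sum_single_index] <;> simp

def Th13 (p : Raw) : Raw :=
  (insert 1 (p.1.image iot), insert 3 (p.2.1.image iot),
    fun j => if j = 1 then 3 else if j ∈ p.1.image iot then iot (p.2.2 (iotInv j)) else j)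

lemma rho13_smul'_single_Th_one (n : ℕ) (p : Raw) (a : ZMod 2) :
    smul' (rho13 n) (Finsupp.single (Th 1 p) a) = 0 := by
  rw [rho13, smul'_sum_left]
  refine Finset.sum_eq_zero fun V hV => ?_
  rw [smul'_single_single, if_neg]
  intro h
  dsimp only [Th] at h
  have h1 : 1 ∈ insert 3 V := h ▸ Finset.mem_insert_self _ _
  rcases Finset.mem_insert.mp h1 with h1 | h1
  · omega
  · exact Finset.notMem_of_mem_powerset_of_notMem hV (by simp) h1

lemma single_Th_three_smul'_rho13 (n : ℕ) (p : Raw) (a : ZMod 2) :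
    smul' (Finsupp.single (Th 3 p) a) (rho13 n) = 0 := by
  rw [rho13, smul'_sum_right]
  refine Finset.sum_eq_zero fun V hV => ?_
  rw [smul'_single_single, if_neg]
  intro h
  dsimp only [Th] at h
  have h3 : 3 ∈ insert 1 V := h ▸ Finset.mem_insert_self _ _
  rcases Finset.mem_insert.mp h3 with h3 | h3
  · omega
  · exact Finset.notMem_of_mem_powerset_of_notMem hV (by simp) h3

lemma rho13_smul'_single_Th_three {n : ℕ} {p : Raw} (hp : p.1 ⊆ Finset.Icc 1 (4 * n))
    (a : ZMod 2) : smul' (rho13 n) (Finsupp.single (Th 3 p) a) = Finsupp.single (Th13 p) a := by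
  rw [rho13, smul'_sum_left, Finset.sum_eq_single_of_mem _ (image_iot_mem_powerset hp)]
  · simp only [smul'_single_single, Th, ↓reduceIte, one_mul, Th13]
    congr 1
    simp only [Prod.mk.injEq, true_and]
    funext j
    split_ifs <;> simp_all [iot_ne_of_lt_four]
  · intro V hV hne
    rw [smul'_single_single, if_neg]
    exact fun h => hne <| Finset.eq_of_insert_eq_insert
      (Finset.notMem_of_mem_powerset_of_notMem hV (by simp))
      (notMem_image_iot_of_lt_four (by norm_num) _) h

lemma single_Th_one_smul'_rho13 {n : ℕ} {p : Raw} (hp : p.2.1 ⊆ Finset.Icc 1 (4 * n))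
    (a : ZMod 2) : smul' (Finsupp.single (Th 1 p) a) (rho13 n) = Finsupp.single (Th13 p) a := by
  rw [rho13, smul'_sum_right, Finset.sum_eq_single_of_mem _ (image_iot_mem_powerset hp)]
  · simp only [smul'_single_single, Th, ↓reduceIte, mul_one, Th13]
    congr 1
    simp only [Prod.mk.injEq, true_and]
    funext j
    split_ifs <;> simp_all [iot_ne_of_lt_four]
  · intro V hV hne
    rw [smul'_single_single, if_neg]
    exact fun h => hne <| (Finset.eq_of_insert_eq_insert
      (notMem_image_iot_of_lt_four (by norm_num) _)
      (Finset.notMem_of_mem_powerset_of_notMem hV (by simp)) h).symm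

lemma rho13_smul'_Lmap_add_Lmap_smul'_rho13 {n : ℕ} {x : SAlg}
    (hx : ∀ p ∈ x.support, Good n p) :
    smul' (rho13 n) (Lmap x) + smul' (Lmap x) (rho13 n) = 0 := by
  rw [Lmap_apply, Finsupp.sum, smul'_sum_right, smul'_sum_left, ← Finset.sum_add_distrib]
  refine Finset.sum_eq_zero fun p hp => ?_
  obtain ⟨hS, hT, -⟩ := hx p hp
  rw [smul'_add_right, smul'_add_left, rho13_smul'_single_Th_one, rho13_smul'_single_Th_three hS,
    single_Th_one_smul'_rho13 hT, single_Th_three_smul'_rho13, zero_add, add_zero,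
    ← Finsupp.single_add, CharTwo.add_self_eq_zero, Finsupp.single_zero]

/-- The map `ι_n` is injective on `{1,…,4n}`; the `F₂`-linear map `L_n`
(sending a basis partial permutation `(S,T,σ)` on `{1,…,4n}` to
`Σ_{h∈{1,3}} (ι_n S, ι_n T, ι_n∘σ∘ι_n⁻¹)_h`) is injective on elements supported on genuine
partial permutations on `{1,…,4n}`; and the image of `L_n` commutes with `ρ_{1,3}`:
`ρ_{1,3}·L_n(ρ) + L_n(ρ)·ρ_{1,3} = 0` for all such `ρ`. -/
theorem stmt19 (n : ℕ) :
    Set.InjOn iot ↑(Finset.Icc 1 (4 * n)) ∧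
    Set.InjOn Lmap {x : SAlg | ∀ p ∈ x.support, Good n p} ∧
    (∀ x : SAlg, (∀ p ∈ x.support, Good n p) →
      smul' (rho13 n) (Lmap x) + smul' (Lmap x) (rho13 n) = 0) :=
  ⟨iot_injOn_Icc n, Lmap_injOn n, fun _ hx => rho13_smul'_Lmap_add_Lmap_smul'_rho13 hx⟩

end Stmt19
end
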